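/- (Core estimate of Lemma 2.3.) Let s ∈ ℝ with s > 1, and let z ∈ ℍ satisfy im z < 1 and im(δ·z) ≤ 1 for every δ ∈ Γ. Assume there exists U > 0 such that for every t ≥ 0 the set A(z,t) is finite with Π(z,t) ≤ U·e^t, and assume T₀ ≥ 0 is such that A(h,z,t) = ∅ for all t with 0 ≤ t ≤ T₀ (equivalently, for every δ ∈ Γ with −1/2 ≤ re(δ·z) < 1/2 one has Metric.infDist (δ·z) h > T₀). Then E(z,s) ≤ (e·U·s/(s−1)) · e^{−(s−1)·T₀}. -/

import Mathlib

open scoped UpperHalfPlane MatrixGroups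
open UpperHalfPlane

noncomputable section

/-- The parabolic element `T = [[1,1],[0,1]]` of `SL(2,ℝ)`, acting on `ℍ` by `z ↦ z + 1`. -/
def T : SL(2, ℝ) := ⟨!![1, 1; 0, 1], by norm_num [Matrix.det_fin_two_of]⟩

/-- The horocycle segment `h ⊆ ℍ`: points with `-1/2 ≤ re < 1/2` and `im = 1`. -/
def horocycle : Set ℍ := {w : ℍ | -(1 / 2) ≤ w.re ∧ w.re < 1 / 2 ∧ w.im = 1}

variable (Γ : Subgroup SL(2, ℝ))

/-- The cyclic subgroup `Γ∞` of `Γ` generated by `T`. -/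
abbrev GammaInf (hT : T ∈ Γ) : Subgroup Γ := Subgroup.zpowers ⟨T, hT⟩

/-- The set of right cosets `Γ∞\Γ`. -/
abbrev Cosets (hT : T ∈ Γ) := Quotient (QuotientGroup.rightRel (GammaInf Γ hT))

variable (hT : T ∈ Γ)

/-- The term `(im (δ·z))^s` of the Eisenstein series attached to a coset `q ∈ Γ∞\Γ`
(`δ` a representative of `q`; the value is independent of the representative). -/
def eisTerm (z : ℍ) (s : ℝ) (q : Cosets Γ hT) : ℝ :=
  (((Quotient.out q : Γ) : SL(2, ℝ)) • z).im ^ s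

/-- The Eisenstein series `E(z,s) = ∑'_{q ∈ Γ∞\Γ} (im (δ·z))^s`. -/
def Eis (z : ℍ) (s : ℝ) : ℝ := ∑' q : Cosets Γ hT, eisTerm Γ hT z s q

/-- `A(z,t)`: the set of cosets `q ∈ Γ∞\Γ` admitting a representative `δ` with
`dist(i, δ·z) ≤ t`. -/
def Aset (z : ℍ) (t : ℝ) : Set (Cosets Γ hT) :=
  {q | ∃ δ : Γ, Quotient.mk (QuotientGroup.rightRel (GammaInf Γ hT)) δ = q ∧
    dist UpperHalfPlane.I ((δ : SL(2, ℝ)) • z) ≤ t}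

/-- `A(h,z,t)`: the set of cosets `q ∈ Γ∞\Γ` admitting a representative `δ` with
`-1/2 ≤ re(δ·z) < 1/2` and `infDist (δ·z) h ≤ t`. -/
def Ahset (z : ℍ) (t : ℝ) : Set (Cosets Γ hT) :=
  {q | ∃ δ : Γ, Quotient.mk (QuotientGroup.rightRel (GammaInf Γ hT)) δ = q ∧
    -(1 / 2) ≤ ((δ : SL(2, ℝ)) • z).re ∧ ((δ : SL(2, ℝ)) • z).re < 1 / 2 ∧
    Metric.infDist ((δ : SL(2, ℝ)) • z) horocycle ≤ t}

/-!
Move each coset representative into the strip `-1/2 ≤ re < 1/2` by a power of `T`. If `d` is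
the distance from `δ·z` to `h`, then `d > T₀`, the vertical geodesic through `δ·z` gives
`im (δ·z) ≤ e^{-d}`, and the triangle inequality through `h` gives `dist(i, δ·z) ≤ d + 1/2`,
so at most `e U e^r` cosets have `d ≤ r`. Writing `e^{-s d} = s ∫_d^∞ e^{-s r} dr` and summing,
`E(z,s) ≤ s ∫_{T₀}^∞ e U e^r e^{-s r} dr`, which is the bound.
-/

open Real MeasureTheory Set
open scoped Finset

lemma sum_exp_neg_mul_le_of_card_le {α : Type*} (F : Finset α) (t : α → ℝ) {C s T₀ : ℝ}
    (hs : 1 < s) (ht : ∀ a ∈ F, T₀ ≤ t a)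
    (hcount : ∀ r, T₀ < r → (#{a ∈ F | t a ≤ r} : ℝ) ≤ C * exp r) :
    ∑ a ∈ F, exp (-s * t a) ≤ C * s / (s - 1) * exp (-(s - 1) * T₀) := by
  set g : ℝ → ℝ := fun r => exp (-s * r)
  have hg_int (c : ℝ) : IntegrableOn g (Ioi c) := integrableOn_exp_mul_Ioi (by linarith) c
  have hlayer (a : α) : exp (-s * t a) = s * ∫ r, (Ioi (t a)).indicator g r := by
    rw [integral_indicator measurableSet_Ioi, integral_exp_mul_Ioi (by linarith)]
    field_simp
  have hpointwise (r : ℝ) : ∑ a ∈ F, (Ioi (t a)).indicator g r ≤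
      (Ioi T₀).indicator (fun r => C * exp (-(s - 1) * r)) r := by
    by_cases hr : T₀ < r
    · calc ∑ a ∈ F, (Ioi (t a)).indicator g r = #{a ∈ F | t a < r} * g r := by
            simp [indicator_apply, Finset.sum_ite, g]
        _ ≤ #{a ∈ F | t a ≤ r} * g r := by
            gcongr
            exact le_of_lt
        _ ≤ C * exp r * g r := by gcongr; exact hcount r hr
        _ = (Ioi T₀).indicator (fun r => C * exp (-(s - 1) * r)) r := by
            rw [indicator_of_mem (mem_Ioi.2 hr), mul_assoc, ← exp_add]
            ring_nf
    · rw [indicator_of_notMem (notMem_Ioi.2 (not_lt.1 hr))]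
      refine (Finset.sum_eq_zero fun a ha => indicator_of_notMem ?_ _).le
      exact notMem_Ioi.2 ((not_lt.1 hr).trans (ht a ha))
  calc ∑ a ∈ F, exp (-s * t a)
      = s * ∫ r, ∑ a ∈ F, (Ioi (t a)).indicator g r := by
        rw [integral_finsetSum _ fun a _ => (hg_int (t a)).integrable_indicator measurableSet_Ioi,
          Finset.mul_sum]
        exact Finset.sum_congr rfl fun a _ => hlayer a
    _ ≤ s * ∫ r, (Ioi T₀).indicator (fun r => C * exp (-(s - 1) * r)) r := by
        gcongr
        · exact integrable_finsetSum _ fun a _ =>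
            (hg_int (t a)).integrable_indicator measurableSet_Ioi
        · exact IntegrableOn.integrable_indicator
            ((integrableOn_exp_mul_Ioi (by linarith) T₀).const_mul C) measurableSet_Ioi
        · exact hpointwise
    _ = C * s / (s - 1) * exp (-(s - 1) * T₀) := by
        rw [integral_indicator measurableSet_Ioi, integral_const_mul,
          integral_exp_mul_Ioi (by linarith)]
        field_simp

lemma mapGL_T :
    Matrix.SpecialLinearGroup.mapGL ℝ T = Matrix.SpecialLinearGroup.mapGL ℝ ModularGroup.T := by
  ext i j
  rw [Matrix.SpecialLinearGroup.mapGL_coe_matrix, Matrix.SpecialLinearGroup.mapGL_coe_matrix,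
    Matrix.SpecialLinearGroup.map_apply_coe, Matrix.SpecialLinearGroup.map_apply_coe]
  fin_cases i <;> fin_cases j <;> simp [T, ModularGroup.T]

lemma T_zpow_smul (k : ℤ) (w : ℍ) : T ^ k • w = (k : ℝ) +ᵥ w := by
  rw [← modular_T_zpow_smul, MulAction.compHom_smul_def, MulAction.compHom_smul_def, map_zpow,
    map_zpow, mapGL_T]

lemma dist_I_le_of_mem_horocycle {p : ℍ} (hp : p ∈ horocycle) : dist I p ≤ 1 / 2 := by
  obtain ⟨hre₁, hre₂, him⟩ := hp
  have hdist : dist (I : ℂ) p = |p.re| := by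
    rw [Complex.dist_of_im_eq (by simp [him]), Real.dist_eq]
    simp
  have hsinh : |p.re| / 2 ≤ sinh (1 / 4) :=
    le_trans (by linarith [abs_le.2 ⟨hre₁, hre₂.le⟩]) (self_le_sinh_iff.2 (by norm_num))
  rw [UpperHalfPlane.dist_eq, hdist, I_im, him, mul_one, sqrt_one, mul_one]
  calc 2 * arsinh (|p.re| / 2) ≤ 2 * arsinh (sinh (1 / 4)) := by gcongr
    _ = 1 / 2 := by rw [arsinh_sinh]; norm_num

lemma dist_I_le_infDist_horocycle_add (w : ℍ) : dist I w ≤ Metric.infDist w horocycle + 1 / 2 := by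
  have hne : horocycle.Nonempty := ⟨I, by simp [horocycle]⟩
  suffices dist I w - 1 / 2 ≤ Metric.infDist w horocycle by linarith
  refine (Metric.le_infDist hne).2 fun p hp => ?_
  linarith [dist_I_le_of_mem_horocycle hp, dist_triangle_right I w p]

lemma im_le_exp_neg_infDist_horocycle {w : ℍ} (him : w.im ≤ 1) (hre₁ : -(1 / 2) ≤ w.re)
    (hre₂ : w.re < 1 / 2) : w.im ≤ exp (-Metric.infDist w horocycle) := by
  let p : ℍ := ⟨⟨w.re, 1⟩, one_pos⟩
  have hp : p ∈ horocycle := ⟨hre₁, hre₂, rfl⟩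
  have hdist : dist w p = -log w.im := by
    rw [UpperHalfPlane.dist_of_re_eq (show w.re = p.re from rfl), show p.im = 1 from rfl,
      log_one, Real.dist_eq, sub_zero, abs_of_nonpos (log_nonpos w.im_pos.le him)]
  calc w.im = exp (-(-log w.im)) := by rw [neg_neg, exp_log w.im_pos]
    _ ≤ exp (-Metric.infDist w horocycle) := by
        gcongr; exact hdist ▸ Metric.infDist_le_dist_of_mem hp

lemma im_smul_eq_of_rightRel {δ δ' : Γ} (h : QuotientGroup.rightRel (GammaInf Γ hT) δ δ')
    (z : ℍ) : ((δ' : SL(2, ℝ)) • z).im = ((δ : SL(2, ℝ)) • z).im := by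
  obtain ⟨k, hk⟩ := Subgroup.mem_zpowers_iff.1 (QuotientGroup.rightRel_apply.1 h)
  have hδ' : (δ' : SL(2, ℝ)) = T ^ k * δ := by
    rw [show δ' = ⟨T, hT⟩ ^ k * δ by rw [hk, inv_mul_cancel_right]]
    rfl
  rw [hδ', mul_smul, T_zpow_smul, vadd_im]

lemma eisTerm_eq {δ : Γ} {q : Cosets Γ hT} (hδ : Quotient.mk _ δ = q) (z : ℍ) (s : ℝ) :
    eisTerm Γ hT z s q = ((δ : SL(2, ℝ)) • z).im ^ s := by
  subst hδ
  rw [eisTerm, im_smul_eq_of_rightRel Γ hT (Quotient.mk_out δ)]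

lemma exists_mk_eq_re_mem (q : Cosets Γ hT) (z : ℍ) :
    ∃ δ : Γ, Quotient.mk _ δ = q ∧
      -(1 / 2) ≤ ((δ : SL(2, ℝ)) • z).re ∧ ((δ : SL(2, ℝ)) • z).re < 1 / 2 := by
  induction q using Quotient.inductionOn with
  | h γ =>
    set k := ⌊((γ : SL(2, ℝ)) • z).re + 1 / 2⌋
    have hsmul : (((⟨T, hT⟩ : Γ) ^ (-k) * γ : Γ) : SL(2, ℝ)) • z =
        ((-k : ℤ) : ℝ) +ᵥ ((γ : SL(2, ℝ)) • z) := by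
      rw [← T_zpow_smul, ← mul_smul]
      rfl
    refine ⟨⟨T, hT⟩ ^ (-k) * γ, Quotient.sound (QuotientGroup.rightRel_apply.2 ?_), ?_⟩
    · rw [mul_inv_rev, mul_inv_cancel_left, zpow_neg, inv_inv]
      exact Subgroup.zpow_mem_zpowers _ _
    · rw [hsmul, vadd_re]
      have := Int.floor_le (((γ : SL(2, ℝ)) • z).re + 1 / 2)
      have := Int.lt_floor_add_one (((γ : SL(2, ℝ)) • z).re + 1 / 2)
      constructor <;> push_cast <;> linarith

lemma eisTerm_le_exp_neg_mul_infDist {z : ℍ} {s : ℝ} (hs : 0 ≤ s) {δ : Γ} {q : Cosets Γ hT}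
    (hδ : Quotient.mk _ δ = q) (him : ((δ : SL(2, ℝ)) • z).im ≤ 1)
    (hre₁ : -(1 / 2) ≤ ((δ : SL(2, ℝ)) • z).re) (hre₂ : ((δ : SL(2, ℝ)) • z).re < 1 / 2) :
    eisTerm Γ hT z s q ≤ exp (-s * Metric.infDist ((δ : SL(2, ℝ)) • z) horocycle) := by
  rw [eisTerm_eq Γ hT hδ, neg_mul, ← mul_neg, mul_comm, exp_mul]
  exact rpow_le_rpow (im_pos _).le (im_le_exp_neg_infDist_horocycle him hre₁ hre₂) hs

lemma card_filter_infDist_le_ncard_Aset {z : ℍ} {δ : Cosets Γ hT → Γ}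
    (hδ : ∀ q, Quotient.mk _ (δ q) = q) (F : Finset (Cosets Γ hT)) {r ρ : ℝ}
    (hρ : r + 1 / 2 ≤ ρ) (hfin : (Aset Γ hT z ρ).Finite) :
    #{q ∈ F | Metric.infDist ((δ q : SL(2, ℝ)) • z) horocycle ≤ r} ≤ (Aset Γ hT z ρ).ncard := by
  rw [← Set.ncard_coe_finset]
  refine Set.ncard_le_ncard (fun q hq => ⟨δ q, hδ q, ?_⟩) hfin
  have := dist_I_le_infDist_horocycle_add ((δ q : SL(2, ℝ)) • z)
  have := (Finset.mem_filter.1 hq).2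
  linarith

theorem eisenstein_upper_bound (s : ℝ) (hs : 1 < s) (z : ℍ)
    (hzΓ : ∀ δ : Γ, ((δ : SL(2, ℝ)) • z).im ≤ 1)
    (U : ℝ)
    (hPi : ∀ t : ℝ, 0 ≤ t →
      (Aset Γ hT z t).Finite ∧ ((Aset Γ hT z t).ncard : ℝ) ≤ U * Real.exp t)
    (T₀ : ℝ) (hT₀ : 0 ≤ T₀)
    (hempty : ∀ t : ℝ, 0 ≤ t → t ≤ T₀ → Ahset Γ hT z t = ∅) :
    Eis Γ hT z s ≤ Real.exp 1 * U * s / (s - 1) * Real.exp (-(s - 1) * T₀) := by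
  choose δ hδ hre₁ hre₂ using fun q => exists_mk_eq_re_mem Γ hT q z
  set d : Cosets Γ hT → ℝ := fun q => Metric.infDist ((δ q : SL(2, ℝ)) • z) horocycle
  have hd (q : Cosets Γ hT) : T₀ < d q := by
    by_contra! h
    have hq : q ∈ Ahset Γ hT z (d q) := ⟨δ q, hδ q, hre₁ q, hre₂ q, le_rfl⟩
    rwa [hempty _ Metric.infDist_nonneg h] at hq
  have hcount (F : Finset (Cosets Γ hT)) (r : ℝ) (hr : T₀ < r) :
      (#{q ∈ F | d q ≤ r} : ℝ) ≤ exp 1 * U * exp r := by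
    obtain ⟨hfin, hle⟩ := hPi (r + 1) (by linarith)
    calc (#{q ∈ F | d q ≤ r} : ℝ) ≤ (Aset Γ hT z (r + 1)).ncard := by
          exact_mod_cast card_filter_infDist_le_ncard_Aset Γ hT hδ F (by linarith) hfin
      _ ≤ U * exp (r + 1) := hle
      _ = exp 1 * U * exp r := by rw [exp_add]; ring
  refine Real.tsum_le_of_sum_le (fun q => rpow_nonneg (im_pos _).le s) fun F => ?_
  calc ∑ q ∈ F, eisTerm Γ hT z s q ≤ ∑ q ∈ F, exp (-s * d q) := Finset.sum_le_sum fun q _ =>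
        eisTerm_le_exp_neg_mul_infDist Γ hT (by linarith) (hδ q) (hzΓ _) (hre₁ q) (hre₂ q)
    _ ≤ exp 1 * U * s / (s - 1) * exp (-(s - 1) * T₀) :=
        sum_exp_neg_mul_le_of_card_le F d hs (fun q _ => (hd q).le) (hcount F)
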